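/- arXiv:math/0603381 — 2 statements merged into one kernel-verified Lean document; each statement's English description precedes it below -/
import Mathlib

section
/- Let a, b be positive integers and let f(x_1, x_2) = c_1 x_1^a + c_2 x_2^b + g(x_1, x_2) be a formal power series over C with c_1 ≠ 0, c_2 ≠ 0, where every monomial of g has (b,a)-weight strictly greater than ab (the common (b,a)-weight of x_1^a and x_2^b). Then f is irreducible in C[[x_1, x_2]] provided gcd(a,b) = 1. -/
/-!
Weight `x₁` by `b` and `x₂` by `a`. Over a domain the weighted order is additive, so a
factorization `f = p * q` splits the weighted order `ab` of `f` as `s + t`. The coefficient of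
`x₁^a` in `p * q` can only come from monomials of minimal weight that are powers of `x₁`,
whence `b ∣ s`; symmetrically `a ∣ s`. As `gcd(a, b) = 1`, `s = 0` or `s = ab`, and a factor of
weighted order `0` has nonzero constant term, i.e. is a unit.
-/

open MvPowerSeries Finsupp

namespace MvPowerSeries

variable {σ R : Type*}

theorem weightedOrder_ne_zero_iff_constantCoeff_eq_zero [Semiring R] {w : σ → ℕ}
    (hw : ∀ i, w i ≠ 0) {f : MvPowerSeries σ R} :
    f.weightedOrder w ≠ 0 ↔ constantCoeff f = 0 := by
  have := nonTorsionWeight_of ℕ w hw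
  rw [← pos_iff_ne_zero, ← coeff_zero_eq_constantCoeff_apply]
  constructor
  · intro h
    exact coeff_eq_zero_of_lt_weightedOrder w (by simpa using h)
  · intro h
    refine Order.one_le_iff_pos.mp (nat_le_weightedOrder w fun d hd => ?_)
    rwa [(weight_eq_zero_iff_eq_zero w).mp (Nat.lt_one_iff.mp hd)]

theorem isUnit_iff_weightedOrder_eq_zero [Field R] {w : σ → ℕ} (hw : ∀ i, w i ≠ 0)
    {f : MvPowerSeries σ R} : IsUnit f ↔ f.weightedOrder w = 0 := by
  rw [isUnit_iff_constantCoeff, isUnit_iff_ne_zero, ne_eq,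
    ← weightedOrder_ne_zero_iff_constantCoeff_eq_zero hw, not_not]

/-- A coefficient of `X i ^ n` in `p * q` at the least possible weight comes from a monomial of
minimal weight in `p` dividing `X i ^ n`, hence a power of `X i`. -/
theorem dvd_weightedOrder_of_coeff_single_mul_ne_zero [Semiring R] {w : σ → ℕ}
    {p q : MvPowerSeries σ R} {i : σ} {n s t : ℕ}
    (hp : p.weightedOrder w = s) (hq : q.weightedOrder w = t) (hn : n * w i = s + t)
    (h : coeff (single i n) (p * q) ≠ 0) : w i ∣ s := by
  classical
  rw [coeff_mul] at h
  obtain ⟨⟨x, y⟩, hxy, hne⟩ := Finset.exists_ne_zero_of_sum_ne_zero h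
  rw [Finset.HasAntidiagonal.mem_antidiagonal] at hxy
  have hsx : s ≤ weight w x := by
    exact_mod_cast hp ▸ weightedOrder_le w (left_ne_zero_of_mul hne)
  have hty : t ≤ weight w y := by
    exact_mod_cast hq ▸ weightedOrder_le w (right_ne_zero_of_mul hne)
  have hx : x = single i (x i) := by
    ext j
    by_cases hj : j = i
    · rw [hj, single_eq_same]
    · have := congr($hxy j)
      simp only [Finsupp.add_apply, single_eq_of_ne hj] at this
      rw [single_eq_of_ne hj]
      omega
  have hweight : weight w x + weight w y = n * w i := by
    rw [← map_add, hxy, weight_single, smul_eq_mul]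
  have : weight w x = s := by omega
  rw [← this, hx, weight_single, smul_eq_mul]
  exact dvd_mul_left _ _

theorem irreducible_of_weightedOrder_eq_mul [Field R] {w : σ → ℕ} (hw : ∀ k, w k ≠ 0)
    {i j : σ} (hij : (w i).Coprime (w j)) {f : MvPowerSeries σ R}
    (hf : f.weightedOrder w = (w i * w j : ℕ))
    (hi : coeff (single i (w j)) f ≠ 0) (hj : coeff (single j (w i)) f ≠ 0) :
    Irreducible f := by
  refine ⟨fun hunit => ?_, fun p q hpq => ?_⟩
  · rw [isUnit_iff_weightedOrder_eq_zero hw, hf, Nat.cast_eq_zero] at hunit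
    exact mul_ne_zero (hw i) (hw j) hunit
  subst hpq
  obtain ⟨s, hs⟩ := ENat.ne_top_iff_exists.mp
    ((weightedOrder_eq_top_iff w).not.mpr (left_ne_zero_of_mul (ne_zero_of_map hi)))
  obtain ⟨t, ht⟩ := ENat.ne_top_iff_exists.mp
    ((weightedOrder_eq_top_iff w).not.mpr (right_ne_zero_of_mul (ne_zero_of_map hi)))
  have hst : s + t = w i * w j := by
    rw [weightedOrder_mul, ← hs, ← ht] at hf
    exact_mod_cast hf
  have hdvd : w i * w j ∣ s := hij.mul_dvd_of_dvd_of_dvd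
    (dvd_weightedOrder_of_coeff_single_mul_ne_zero hs.symm ht.symm (by rw [hst, mul_comm]) hi)
    (dvd_weightedOrder_of_coeff_single_mul_ne_zero hs.symm ht.symm hst.symm hj)
  simp only [isUnit_iff_weightedOrder_eq_zero hw, ← hs, ← ht, Nat.cast_eq_zero]
  rcases Nat.eq_zero_or_pos s with hs0 | hs0
  · exact Or.inl hs0
  · have := Nat.le_of_dvd hs0 hdvd
    right
    omega

end MvPowerSeries

/-- Let `f = c₁ x₁^a + c₂ x₂^b + g` in `ℂ[[x₁,x₂]]` with `c₁, c₂ ≠ 0`, where every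
monomial of `g` has `(b,a)`-weight strictly greater than `a*b`.  If `gcd(a,b) = 1`
then `f` is irreducible in `ℂ[[x₁,x₂]]`. -/
theorem stmt_5 (a b : ℕ) (ha : 0 < a) (hb : 0 < b) (hab : Nat.gcd a b = 1)
    (c₁ c₂ : ℂ) (hc₁ : c₁ ≠ 0) (hc₂ : c₂ ≠ 0)
    (g : MvPowerSeries (Fin 2) ℂ)
    (hg : ∀ β : Fin 2 →₀ ℕ, MvPowerSeries.coeff (R := ℂ) β g ≠ 0 → a * b < b * β 0 + a * β 1)
    (f : MvPowerSeries (Fin 2) ℂ)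
    (hf : f = MvPowerSeries.C (σ := Fin 2) (R := ℂ) c₁ * (X 0) ^ a
        + MvPowerSeries.C (σ := Fin 2) (R := ℂ) c₂ * (X 1) ^ b + g) :
    Irreducible f := by
  classical
  set w : Fin 2 → ℕ := ![b, a]
  have hweight : ∀ d : Fin 2 →₀ ℕ, weight w d = b * d 0 + a * d 1 := fun d => by
    simp [w, weight_eq_sum, Fin.sum_univ_two, mul_comm]
  have hcoeff : ∀ d, weight w d ≤ a * b → coeff d f =
      (if d = single 0 a then c₁ else 0) + (if d = single 1 b then c₂ else 0) := by
    intro d hd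
    have hgd : coeff d g = 0 := by
      by_contra h
      have := hg d h
      rw [hweight] at hd
      omega
    simp [hf, coeff_X_pow, hgd]
  have hne : single (0 : Fin 2) a ≠ single 1 b := by simp [single_eq_single_iff, ha.ne']
  have hfa : coeff (single 0 a) f ≠ 0 := by
    simpa [hcoeff (single 0 a) (by simp [hweight, mul_comm]), hne] using hc₁
  have hfb : coeff (single 1 b) f ≠ 0 := by
    simpa [hcoeff (single 1 b) (by simp [hweight]), hne.symm] using hc₂
  have hord : f.weightedOrder w = (a * b : ℕ) := by
    refine (weightedOrder_eq_nat w).mpr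
      ⟨⟨single 0 a, hfa, by simp [hweight, mul_comm]⟩, fun d hd => ?_⟩
    have hne₁ : d ≠ single 0 a := by rintro rfl; simp [hweight, mul_comm] at hd
    have hne₂ : d ≠ single 1 b := by rintro rfl; simp [hweight] at hd
    rw [hcoeff d hd.le, if_neg hne₁, if_neg hne₂, add_zero]
  exact irreducible_of_weightedOrder_eq_mul (w := w) (i := 0) (j := 1)
    (by simp [w, Fin.forall_fin_two, ha.ne', hb.ne']) (Nat.Coprime.symm hab)
    (hord.trans (by simp [w, mul_comm])) hfa hfb
end

section
/- Let f_1 = x_1^a + x_2^b + g_1 and f_2 = x_1^c + x_2^d + g_2 in C[[x_1, x_2]], where a, b, c, d are positive integers with bc > ad, ρ_{(b,a)}(g_1) > ab, and ρ_{(d,c)}(g_2) > cd. Then f_1 and f_2 are relatively prime in C[[x_1, x_2]] (they have no common irreducible factor). -/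
/-!
For the weights `w = (b, a)` the leading form (the part of lowest `w`-weight) of `f₁` is
`x₁^a + x₂^b`. Leading forms multiply, so the leading form of a factor `q` of `f₁` divides it and
therefore contains pure powers `x₁^k` and `x₂^l`; thus `ρ_w(q) = b k = a l`. Since `x₁^k` and
`x₂^l` are then the lowest pure powers of `x₁` and `x₂` occurring in `q`, `k` and `l` do not
depend on the weight, and a common factor of `f₂` would also satisfy `d k = c l`. As `ad < bc`
this forces `k = 0`, so `q` has a nonzero constant term and is a unit.
-/

open MvPowerSeries

namespace MvPowerSeries

open Finsupp

variable {σ R : Type*} [Semiring R]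

theorem exists_coeff_single_ne_zero_of_coeff_single_mul_ne_zero {f g : MvPowerSeries σ R}
    {i : σ} {A : ℕ} (h : coeff (single i A) (f * g) ≠ 0) :
    ∃ k, coeff (single i k) f ≠ 0 := by
  classical
  rw [coeff_mul, antidiagonal_single, Finset.sum_map] at h
  obtain ⟨⟨k, l⟩, -, hkl⟩ := Finset.exists_ne_zero_of_sum_ne_zero h
  exact ⟨k, left_ne_zero_of_mul hkl⟩

theorem exists_coeff_single_ne_zero_and_weightedOrder_eq [NoZeroDivisors R] (w : σ → ℕ)
    {f g : MvPowerSeries σ R} {i : σ} {A : ℕ} (hcoeff : coeff (single i A) (f * g) ≠ 0)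
    (hord : ((A * w i : ℕ) : ℕ∞) ≤ (f * g).weightedOrder w) :
    ∃ k, coeff (single i k) f ≠ 0 ∧ f.weightedOrder w = (k * w i : ℕ) := by
  have hfg : f * g ≠ 0 := fun h ↦ hcoeff (by rw [h, map_zero])
  obtain ⟨p, hp⟩ := ENat.ne_top_iff_exists.mp
    ((weightedOrder_eq_top_iff w).not.mpr (left_ne_zero_of_mul hfg))
  obtain ⟨r, hr⟩ := ENat.ne_top_iff_exists.mp
    ((weightedOrder_eq_top_iff w).not.mpr (right_ne_zero_of_mul hfg))
  have hpr : p + r = A * w i := by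
    have hle := weightedOrder_le w hcoeff
    rw [weight_single, smul_eq_mul] at hle
    rw [weightedOrder_mul, ← hp, ← hr] at hord hle
    exact_mod_cast le_antisymm hle hord
  have hlead : coeff (single i A)
      (weightedHomogeneousComponent w p f * weightedHomogeneousComponent w r g) ≠ 0 := by
    rwa [← weightedHomogeneousComponent_mul_of_le_weightedOrder hp.le hr.le,
      coeff_weightedHomogeneousComponent, weight_single, smul_eq_mul, if_pos hpr.symm]
  obtain ⟨k, hk⟩ := exists_coeff_single_ne_zero_of_coeff_single_mul_ne_zero hlead
  rw [coeff_weightedHomogeneousComponent, weight_single, smul_eq_mul] at hk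
  split_ifs at hk with hkp
  · exact ⟨k, hk, by rw [← hp, hkp]⟩
  · exact (hk rfl).elim

theorem coeff_single_X_pow_add_X_pow_add {i j : σ} (hij : i ≠ j) {A B : ℕ} (hA : 0 < A)
    (w : σ → ℕ) {g : MvPowerSeries σ R} (hg : ((A * w i : ℕ) : ℕ∞) < g.weightedOrder w) :
    coeff (single i A) (X i ^ A + X j ^ B + g) = 1 := by
  classical
  have hji : single i A ≠ single j B := fun h ↦
    (single_eq_single_iff _ _ _ _).mp h |>.elim (fun h ↦ hij h.1) (fun h ↦ hA.ne' h.1)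
  rw [map_add, map_add, coeff_X_pow, coeff_X_pow, if_pos rfl, if_neg hji,
    coeff_eq_zero_of_lt_weightedOrder w (by rwa [weight_single, smul_eq_mul]), add_zero, add_zero]

theorem le_weightedOrder_X_pow_add_X_pow_add [Nontrivial R] (w : σ → ℕ) {i j : σ} {A B : ℕ}
    (hAB : A * w i = B * w j) {g : MvPowerSeries σ R}
    (hg : ((A * w i : ℕ) : ℕ∞) < g.weightedOrder w) :
    ((A * w i : ℕ) : ℕ∞) ≤ (X i ^ A + X j ^ B + g).weightedOrder w := by
  have hX : ∀ (k : σ) (n : ℕ), (X k ^ n : MvPowerSeries σ R).weightedOrder w = (n * w k : ℕ) :=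
    fun k n ↦ by
      rw [X_pow_eq, weightedOrder_monomial_of_ne_zero w one_ne_zero, weight_single, smul_eq_mul]
  refine le_trans ?_ (min_weightedOrder_le_add w)
  refine le_min (le_trans ?_ (min_weightedOrder_le_add w)) hg.le
  rw [hX, hX, hAB, min_self]

theorem le_of_coeff_single_ne_zero_of_weightedOrder_eq {w : σ → ℕ} {i : σ} (hw : 0 < w i)
    {f : MvPowerSeries σ R} {k k' : ℕ} (hk' : coeff (single i k') f ≠ 0)
    (h : f.weightedOrder w = (k * w i : ℕ)) : k ≤ k' := by
  have := weightedOrder_le w hk'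
  rw [h, weight_single, smul_eq_mul, Nat.cast_le] at this
  exact Nat.le_of_mul_le_mul_right this hw

theorem eq_of_weightedOrder_eq_of_coeff_single_ne_zero {w w' : σ → ℕ} {i : σ}
    (hw : 0 < w i) (hw' : 0 < w' i) {f : MvPowerSeries σ R} {k k' : ℕ}
    (hk : coeff (single i k) f ≠ 0) (hk' : coeff (single i k') f ≠ 0)
    (h : f.weightedOrder w = (k * w i : ℕ)) (h' : f.weightedOrder w' = (k' * w' i : ℕ)) :
    k = k' :=
  le_antisymm (le_of_coeff_single_ne_zero_of_weightedOrder_eq hw hk' h)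
    (le_of_coeff_single_ne_zero_of_weightedOrder_eq hw' hk h')

theorem lt_weightedOrder_of_forall_coeff_ne_zero {g : MvPowerSeries (Fin 2) R} {N p r : ℕ}
    (h : ∀ β : Fin 2 →₀ ℕ, coeff β g ≠ 0 → N < p * β 0 + r * β 1) :
    (N : ℕ∞) < g.weightedOrder ![p, r] := by
  rw [← ENat.add_one_le_iff (ENat.natCast_ne_top N)]
  refine nat_le_weightedOrder _ fun β hβ ↦ ?_
  by_contra hne
  have := h β hne
  rw [weight_eq_sum, Fin.sum_univ_two] at hβ
  simp only [Matrix.cons_val_zero, Matrix.cons_val_one, smul_eq_mul] at hβ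
  linarith

theorem exists_coeff_single_ne_zero_of_dvd_X_pow_add_X_pow_add
    [NoZeroDivisors R] [Nontrivial R] {A B : ℕ} (hA : 0 < A) (hB : 0 < B)
    {g q : MvPowerSeries (Fin 2) R} (hg : ((A * B : ℕ) : ℕ∞) < g.weightedOrder ![B, A])
    (hq : q ∣ X 0 ^ A + X 1 ^ B + g) :
    ∃ k l, coeff (single 0 k) q ≠ 0 ∧ coeff (single 1 l) q ≠ 0 ∧
      q.weightedOrder ![B, A] = (k * B : ℕ) ∧ q.weightedOrder ![B, A] = (l * A : ℕ) := by
  obtain ⟨h, hqh⟩ := hq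
  have hg' : ((B * A : ℕ) : ℕ∞) < g.weightedOrder ![B, A] := by rwa [mul_comm]
  have hswap : X 0 ^ A + X 1 ^ B + g = X 1 ^ B + X 0 ^ A + g := by rw [add_comm (X 0 ^ A)]
  obtain ⟨k, hk, hkB⟩ := exists_coeff_single_ne_zero_and_weightedOrder_eq ![B, A] (i := 0)
    (A := A) (f := q) (g := h)
    (by rw [← hqh, coeff_single_X_pow_add_X_pow_add (by decide) hA _ hg]; exact one_ne_zero)
    (by rw [← hqh]; exact le_weightedOrder_X_pow_add_X_pow_add _ (mul_comm A B) hg)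
  obtain ⟨l, hl, hlA⟩ := exists_coeff_single_ne_zero_and_weightedOrder_eq ![B, A] (i := 1)
    (A := B) (f := q) (g := h)
    (by rw [← hqh, hswap, coeff_single_X_pow_add_X_pow_add (by decide) hB _ hg']
        exact one_ne_zero)
    (by rw [← hqh, hswap]; exact le_weightedOrder_X_pow_add_X_pow_add _ (mul_comm B A) hg')
  exact ⟨k, l, hk, hl, hkB, hlA⟩

end MvPowerSeries

/-- Let `f₁ = x₁^a + x₂^b + g₁` and `f₂ = x₁^c + x₂^d + g₂` in `ℂ[[x₁,x₂]]` with
`bc > ad`, `ρ_{(b,a)}(g₁) > ab` and `ρ_{(d,c)}(g₂) > cd`.  Then `f₁` and `f₂` have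
no common irreducible factor. -/
theorem stmt_6 (a b c d : ℕ) (ha : 0 < a) (hb : 0 < b) (hc : 0 < c) (hd : 0 < d)
    (hbcad : a * d < b * c)
    (g₁ g₂ : MvPowerSeries (Fin 2) ℂ)
    (hg₁ : ∀ β : Fin 2 →₀ ℕ, MvPowerSeries.coeff β g₁ ≠ 0 → a * b < b * β 0 + a * β 1)
    (hg₂ : ∀ β : Fin 2 →₀ ℕ, MvPowerSeries.coeff β g₂ ≠ 0 → c * d < d * β 0 + c * β 1)
    (f₁ f₂ : MvPowerSeries (Fin 2) ℂ)
    (hf₁ : f₁ = (X 0) ^ a + (X 1) ^ b + g₁)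
    (hf₂ : f₂ = (X 0) ^ c + (X 1) ^ d + g₂) :
    ∀ q : MvPowerSeries (Fin 2) ℂ, Irreducible q → q ∣ f₁ → ¬ q ∣ f₂ := by
  rintro q hq hq₁ hq₂
  subst hf₁ hf₂
  obtain ⟨k, l, hk, hl, hbk, hal⟩ := exists_coeff_single_ne_zero_of_dvd_X_pow_add_X_pow_add ha hb
    (lt_weightedOrder_of_forall_coeff_ne_zero hg₁) hq₁
  obtain ⟨k', l', hk', hl', hdk, hcl⟩ := exists_coeff_single_ne_zero_of_dvd_X_pow_add_X_pow_add
    hc hd (lt_weightedOrder_of_forall_coeff_ne_zero hg₂) hq₂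
  obtain rfl : k = k' := eq_of_weightedOrder_eq_of_coeff_single_ne_zero hb hd hk hk' hbk hdk
  obtain rfl : l = l' := eq_of_weightedOrder_eq_of_coeff_single_ne_zero ha hc hl hl' hal hcl
  have hkb : k * b = l * a := by exact_mod_cast hbk.symm.trans hal
  have hkd : k * d = l * c := by exact_mod_cast hdk.symm.trans hcl
  have hk0 : k = 0 := by
    have : k * (b * c) = k * (a * d) := by linear_combination c * hkb - a * hkd
    exact (mul_eq_mul_left_iff.mp this).resolve_left hbcad.ne'
  rw [hk0, Finsupp.single_zero, coeff_zero_eq_constantCoeff] at hk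
  exact hq.not_isUnit (isUnit_iff_constantCoeff.mpr hk.isUnit)
end
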